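/- If W is an infinite word whose recurrence function satisfies P₂(k) ≤ C·k for all k, then its factor complexity is at most linear: P(N) ≤ (C-1)·N + 1 for all N. -/

import Mathlib

/-!
Every factor of length `N` occurs in the prefix of length `C * N`, and a word of length `C * N`
has at most `C * N - N + 1` distinct factors of length `N`, one for each starting position.
-/

/-- The factor (subword) of the infinite word `W` of length `n` starting at position `i`. -/
def factorAt {A : Type*} (W : ℕ → A) (i n : ℕ) : List A :=
  (List.range n).map (fun j => W (i + j))

/-- `u` is a finite factor of the infinite word `W`. -/
def IsFactorOf {A : Type*} (u : List A) (W : ℕ → A) : Prop :=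
  ∃ i, u = factorAt W i u.length

namespace List

variable {α : Type*}

theorem setOf_infix_length_subset_image (u : List α) (N : ℕ) :
    {v : List α | v <:+: u ∧ v.length = N} ⊆
      (fun t => (u.drop t).take N) '' ↑(Finset.range (u.length - N + 1)) := by
  rintro v ⟨⟨s, t, rfl⟩, rfl⟩
  refine ⟨s.length, ?_, ?_⟩
  · simp only [Finset.coe_range, Set.mem_Iio, length_append]
    omega
  · simp only [append_assoc, drop_left' rfl, take_left' rfl]

theorem ncard_setOf_infix_length_le (u : List α) (N : ℕ) :
    {v : List α | v <:+: u ∧ v.length = N}.ncard ≤ u.length - N + 1 :=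
  calc {v : List α | v <:+: u ∧ v.length = N}.ncard
      ≤ ((fun t => (u.drop t).take N) '' ↑(Finset.range (u.length - N + 1))).ncard :=
        Set.ncard_le_ncard (setOf_infix_length_subset_image u N) ((Finset.finite_toSet _).image _)
    _ ≤ (↑(Finset.range (u.length - N + 1)) : Set ℕ).ncard :=
        Set.ncard_image_le (Finset.finite_toSet _)
    _ = u.length - N + 1 := by rw [Set.ncard_coe_finset, Finset.card_range]

end List

@[simp] theorem length_factorAt {A : Type*} (W : ℕ → A) (i n : ℕ) :
    (factorAt W i n).length = n := by
  simp [factorAt]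

theorem isFactorOf_factorAt {A : Type*} (W : ℕ → A) (i n : ℕ) : IsFactorOf (factorAt W i n) W :=
  ⟨i, by rw [length_factorAt]⟩

theorem stmt5_general {A : Type*} (W : ℕ → A) (C : ℕ)
    (hrec : ∀ k : ℕ, ∀ u v : List A, IsFactorOf u W → u.length = C * k →
      IsFactorOf v W → v.length = k → v <:+: u) :
    ∀ N : ℕ, Set.ncard {u : List A | IsFactorOf u W ∧ u.length = N} ≤ (C - 1) * N + 1 := by
  intro N
  set u := factorAt W 0 (C * N)
  have hsub : {v : List A | IsFactorOf v W ∧ v.length = N} ⊆ {v | v <:+: u ∧ v.length = N} :=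
    fun v ⟨hv, hvN⟩ => ⟨hrec N u v (isFactorOf_factorAt W 0 _) (length_factorAt W 0 _) hv hvN, hvN⟩
  have hfin : {v | v <:+: u ∧ v.length = N}.Finite :=
    ((Finset.finite_toSet _).image _).subset (u.setOf_infix_length_subset_image N)
  calc Set.ncard {v : List A | IsFactorOf v W ∧ v.length = N}
      ≤ Set.ncard {v | v <:+: u ∧ v.length = N} := Set.ncard_le_ncard hsub hfin
    _ ≤ u.length - N + 1 := u.ncard_setOf_infix_length_le N
    _ = (C - 1) * N + 1 := by rw [length_factorAt, Nat.sub_one_mul]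

/-- Linear recurrence implies linear factor complexity: P(N) ≤ (C-1)·N + 1. -/
theorem stmt5 {A : Type*} [Fintype A] (W : ℕ → A) (C : ℕ)
    (hrec : ∀ k : ℕ, ∀ u v : List A, IsFactorOf u W → u.length = C * k →
      IsFactorOf v W → v.length = k → v <:+: u) :
    ∀ N : ℕ, Set.ncard {u : List A | IsFactorOf u W ∧ u.length = N} ≤ (C - 1) * N + 1 :=
  stmt5_general W C hrec
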